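/- arXiv:2401.14318 — 2 statements merged into one kernel-verified Lean document; each statement's English description precedes it below -/
import Mathlib

section
/- The set NCP of noncrossing partitions, equipped with the map sending (P, Q) to P * (| ⊔̲ Q), is a Catalan pair: every nonempty noncrossing partition R has a unique decomposition R = P * (| ⊔̲ Q) with P, Q noncrossing partitions. Here P * Q denotes concatenation, | denotes the unique partition of a one-element set, and P ⊔̲ Q (right-merging) is the partition obtained from P * Q by merging the last block of P with the last block of Q. -/
/-- `r` is (the equivalence relation of) a noncrossing partition of `{0, …, n-1}`. -/
def IsNCPartition (n : ℕ) (r : ℕ → ℕ → Prop) : Prop :=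
  (∀ i, r i i ↔ i < n) ∧
  (∀ i j, r i j → r j i) ∧
  (∀ i j k, r i j → r j k → r i k) ∧
  (∀ a b c d, a < b → b < c → c < d → r a c → r b d → r a b)

/-- The empty partition. -/
def emptyPart : ℕ → ℕ → Prop := fun _ _ => False

/-- The partition `|` of a one-element set. -/
def onePart : ℕ → ℕ → Prop := fun i j => i = 0 ∧ j = 0

/-- Shift a partition by `m`. -/
def shiftPart (m : ℕ) (r : ℕ → ℕ → Prop) : ℕ → ℕ → Prop :=
  fun i j => m ≤ i ∧ m ≤ j ∧ r (i - m) (j - m)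

/-- Concatenation `P * Q` of a partition `P` of `[m]` with a partition `Q`. -/
def concatPart (m : ℕ) (P Q : ℕ → ℕ → Prop) : ℕ → ℕ → Prop :=
  fun i j => P i j ∨ shiftPart m Q i j

/-- Right-merging `P ⊔̲ Q` of `P` of `[m]` with `Q` of `[n]`:
merge the last block of `P` with the last block of `Q` in `P * Q`. -/
def rmergePart (m n : ℕ) (P Q : ℕ → ℕ → Prop) : ℕ → ℕ → Prop :=
  fun i j => concatPart m P Q i j ∨
    (P i (m - 1) ∧ shiftPart m Q j (m + n - 1)) ∨
    (shiftPart m Q i (m + n - 1) ∧ P j (m - 1))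

/-- Left-merging `P ⊔̄ Q` of `P` of `[m]` with `Q`:
merge the first block of `P` with the first block of `Q` in `P * Q`. -/
def lmergePart (m : ℕ) (P Q : ℕ → ℕ → Prop) : ℕ → ℕ → Prop :=
  fun i j => concatPart m P Q i j ∨
    (P i 0 ∧ shiftPart m Q j m) ∨
    (shiftPart m Q i m ∧ P j 0)

/-- Any two related elements of an `IsNCPartition n` lie in `{0,…,n-1}`. -/
lemma ncp_dom {n : ℕ} {r : ℕ → ℕ → Prop} (h : IsNCPartition n r) {i j : ℕ}
    (hij : r i j) : i < n ∧ j < n := by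
  obtain ⟨hrefl, hsymm, htrans, -⟩ := h
  exact ⟨(hrefl i).1 (htrans i j i hij (hsymm i j hij)),
    (hrefl j).1 (htrans j i j (hsymm i j hij) hij)⟩

/-- Noncrossing partitions with the map `(P, Q) ↦ P * (| ⊔̲ Q)` form a Catalan pair:
every nonempty noncrossing partition has a unique such decomposition. -/
theorem ncp_catalan_decomp (n : ℕ) (Rp : ℕ → ℕ → Prop) (hR : IsNCPartition (n + 1) Rp) :
    ∃! d : ℕ × ℕ × (ℕ → ℕ → Prop) × (ℕ → ℕ → Prop),
      d.1 + d.2.1 = n ∧ IsNCPartition d.1 d.2.2.1 ∧ IsNCPartition d.2.1 d.2.2.2 ∧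
      Rp = concatPart d.1 d.2.2.1 (rmergePart 1 d.2.1 onePart d.2.2.2) := by
  classical
  obtain ⟨hrefl, hsymm, htrans, hnc⟩ := hR
  have hRn : Rp n n := (hrefl n).2 (Nat.lt_succ_self n)
  have hex : ∃ i, Rp i n := ⟨n, hRn⟩
  set k := Nat.find hex with hkdef
  have hkn : Rp k n := Nat.find_spec hex
  have hmin : ∀ i < k, ¬ Rp i n := fun i hi => Nat.find_min hex hi
  have hk : k ≤ n := Nat.find_min' hex hRn
  set m := n - k with hmdef
  have hkm : k + m = n := by omega
  -- nothing below k relates to anything ≥ k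
  have hsplit : ∀ i j, i < k → k ≤ j → ¬ Rp i j := by
    intro i j hi hj hij
    have hjn : j ≤ n := by
      have := (ncp_dom ⟨hrefl, hsymm, htrans, hnc⟩ hij).2; omega
    rcases eq_or_lt_of_le hj with h1 | h1
    · rcases eq_or_lt_of_le hjn with h2 | h2
      · exact hmin i hi (h2 ▸ hij)
      · exact hmin i hi (htrans i j n hij (h1 ▸ hkn))
    · rcases eq_or_lt_of_le hjn with h2 | h2
      · exact hmin i hi (h2 ▸ hij)
      · exact hmin i hi (htrans i k n (hnc i k j n hi h1 h2 hij hkn) hkn)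
  -- the components
  set Pp : ℕ → ℕ → Prop := fun i j => Rp i j ∧ i < k ∧ j < k with hPdef
  set Qq : ℕ → ℕ → Prop := fun i j => Rp (k + 1 + i) (k + 1 + j) ∧ i < m ∧ j < m with hQdef
  have hPncp : IsNCPartition k Pp := by
    refine ⟨fun i => ⟨fun h => h.2.1, fun h => ⟨(hrefl i).2 (by omega), h, h⟩⟩,
      fun i j h => ⟨hsymm i j h.1, h.2.2, h.2.1⟩,
      fun i j l h1 h2 => ⟨htrans i j l h1.1 h2.1, h1.2.1, h2.2.2⟩,
      fun a b c d hab hbc hcd h1 h2 =>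
        ⟨hnc a b c d hab hbc hcd h1.1 h2.1, h1.2.1, h2.2.1⟩⟩
  have hQncp : IsNCPartition m Qq := by
    refine ⟨fun i => ⟨fun h => h.2.1, fun h => ⟨(hrefl _).2 (by omega), h, h⟩⟩,
      fun i j h => ⟨hsymm _ _ h.1, h.2.2, h.2.1⟩,
      fun i j l h1 h2 => ⟨htrans _ _ _ h1.1 h2.1, h1.2.1, h2.2.2⟩,
      fun a b c d hab hbc hcd h1 h2 =>
        ⟨hnc _ _ _ _ (by omega) (by omega) (by omega) h1.1 h2.1, h1.2.1, h2.2.1⟩⟩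
  -- key: Rp is related to n exactly on the block of n, Qq's last block
  have hQn : ∀ j, k + 1 ≤ j → j ≤ n → (Rp j n ↔ (1 ≤ m ∧ Qq (j - k - 1) (m - 1))) := by
    intro j h1 h2
    have hm1 : 1 ≤ m := by omega
    have e1 : k + 1 + (j - k - 1) = j := by omega
    have e2 : k + 1 + (m - 1) = n := by omega
    constructor
    · intro h
      exact ⟨hm1, by rw [hQdef]; exact ⟨by rw [e1, e2]; exact h, by omega, by omega⟩⟩
    · intro ⟨_, h⟩
      have := h.1
      rwa [e1, e2] at this
  -- the decomposition equality
  have hiff : ∀ i j, Rp i j ↔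
      concatPart k Pp (rmergePart 1 m onePart Qq) i j := by
    intro i j
    simp only [concatPart, rmergePart, shiftPart, onePart]
    constructor
    · intro hij
      have hi : i ≤ n := by have := (ncp_dom ⟨hrefl, hsymm, htrans, hnc⟩ hij).1; omega
      have hj : j ≤ n := by have := (ncp_dom ⟨hrefl, hsymm, htrans, hnc⟩ hij).2; omega
      rcases lt_or_ge i k with hik | hik
      · rcases lt_or_ge j k with hjk | hjk
        · exact Or.inl ⟨hij, hik, hjk⟩
        · exact absurd hij (hsplit i j hik hjk)
      · rcases lt_or_ge j k with hjk | hjk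
        · exact absurd (hsymm i j hij) (hsplit j i hjk hik)
        · refine Or.inr ⟨hik, hjk, ?_⟩
          rcases eq_or_lt_of_le hik with h1 | h1
          · rcases eq_or_lt_of_le hjk with h2 | h2
            · -- i = k, j = k
              exact Or.inl (Or.inl ⟨by omega, by omega⟩)
            · -- i = k, j > k : merge branch
              have hjn : Rp j n := htrans j k n (hsymm k j (h1 ▸ hij)) hkn
              have := (hQn j (by omega) hj).1 hjn
              exact Or.inr (Or.inl ⟨⟨by omega, by trivial⟩,
                by omega, by omega, by
                  have e : j - k - 1 = j - k - 1 := rfl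
                  have e2 : 1 + m - 1 - 1 = m - 1 := by omega
                  rw [e2]; exact this.2⟩)
          · rcases eq_or_lt_of_le hjk with h2 | h2
            · -- j = k, i > k : merge branch
              have hin : Rp i n := htrans i k n (h2 ▸ hij) hkn
              have := (hQn i (by omega) hi).1 hin
              exact Or.inr (Or.inr ⟨⟨by omega, by omega, by
                  have e2 : 1 + m - 1 - 1 = m - 1 := by omega
                  rw [e2]; exact this.2⟩, by omega, by trivial⟩)
            · -- i > k, j > k : Qq branch
              refine Or.inl (Or.inr ⟨by omega, by omega, ?_⟩)
              rw [hQdef]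
              refine ⟨?_, by omega, by omega⟩
              have e1 : k + 1 + (i - k - 1) = i := by omega
              have e2 : k + 1 + (j - k - 1) = j := by omega
              rw [e1, e2]; exact hij
    · rintro (⟨h, -, -⟩ | ⟨hik, hjk, hT⟩)
      · exact h
      rcases hT with (⟨h1, h2⟩ | ⟨h1, h2, hq⟩) | (⟨⟨h1, -⟩, h2, h3, hq⟩ | ⟨⟨h1, h3, hq⟩, h2, -⟩)
      · -- i = k = j
        have : i = k := by omega
        have : j = k := by omega
        have hik' : i = k := by omega
        have hjk' : j = k := by omega
        rw [hik', hjk']; exact (hrefl k).2 (by omega)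
      · -- Qq branch
        rw [hQdef] at hq
        have := hq.1
        have e1 : k + 1 + (i - k - 1) = i := by omega
        have e2 : k + 1 + (j - k - 1) = j := by omega
        rwa [e1, e2] at this
      · -- i = k, Rp j n
        have hik' : i = k := by omega
        have hm1 : 1 ≤ m := by omega
        have e2 : 1 + m - 1 - 1 = m - 1 := by omega
        rw [e2] at hq
        have hjn : Rp j n := (hQn j (by omega) (by omega)).2 ⟨hm1, hq⟩
        rw [hik']
        exact htrans k n j hkn (hsymm j n hjn)
      · -- j = k, Rp i n
        have hjk' : j = k := by omega
        have hm1 : 1 ≤ m := by omega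
        have e2 : 1 + m - 1 - 1 = m - 1 := by omega
        rw [e2] at hq
        have hin : Rp i n := (hQn i (by omega) (by omega)).2 ⟨hm1, hq⟩
        rw [hjk']
        exact htrans i n k hin (hsymm k n hkn)
  have heq : Rp = concatPart k Pp (rmergePart 1 m onePart Qq) := by
    funext i j; exact propext (hiff i j)
  refine ⟨(k, m, Pp, Qq), ⟨hkm, hPncp, hQncp, heq⟩, ?_⟩
  -- uniqueness
  rintro ⟨k', m', P', Q'⟩ ⟨hsum', hP', hQ', heq'⟩
  replace hsum' : k' + m' = n := hsum'
  replace hP' : IsNCPartition k' P' := hP'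
  replace hQ' : IsNCPartition m' Q' := hQ'
  replace heq' : Rp = concatPart k' P' (rmergePart 1 m' onePart Q') := heq'
  have hiff' : ∀ i j, Rp i j ↔
      concatPart k' P' (rmergePart 1 m' onePart Q') i j := by
    intro i j; rw [heq']
  have hk'n : k' ≤ n := by omega
  -- Rp k' n
  have hRk'n : Rp k' n := by
    rcases Nat.eq_zero_or_pos m' with hm0 | hm1
    · have : k' = n := by omega
      rw [this]; exact hRn
    · rw [hiff' k' n]
      refine Or.inr ⟨le_refl k', hk'n, Or.inr (Or.inl ⟨⟨by omega, by trivial⟩, ?_⟩)⟩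
      simp only [shiftPart]
      refine ⟨by omega, by omega, ?_⟩
      have e : 1 + m' - 1 - 1 = m' - 1 := by omega
      have e2 : n - k' - 1 = m' - 1 := by omega
      rw [e, e2]
      exact (hQ'.1 (m' - 1)).2 (by omega)
  -- no i < k' with Rp i n
  have hmin' : ∀ i < k', ¬ Rp i n := by
    intro i hi hRin
    rw [hiff' i n] at hRin
    rcases hRin with hP | ⟨h1, -, -⟩
    · have := (ncp_dom hP' hP).2
      omega
    · omega
  have hkk : k' = k := by
    have h1 : k ≤ k' := Nat.find_min' hex hRk'n
    by_contra hne
    have h2 : k < k' := by omega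
    exact hmin' k h2 hkn
  have hmm : m' = m := by omega
  subst hkk; subst hmm
  -- P' = Pp
  have hPP : P' = Pp := by
    funext i j
    apply propext
    constructor
    · intro h
      have hd := ncp_dom hP' h
      have : Rp i j := by
        rw [hiff' i j]; exact Or.inl h
      exact ⟨this, hd.1, hd.2⟩
    · rintro ⟨hij, hi, hj⟩
      have := (hiff' i j).1 hij
      rcases this with h | ⟨h1, -, -⟩
      · exact h
      · omega
  -- Q' = Qq
  have hQQ : Q' = Qq := by
    funext i j
    apply propext
    constructor
    · intro h
      have hd := ncp_dom hQ' h
      have hRij : Rp (k + 1 + i) (k + 1 + j) := by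
        rw [hiff' (k + 1 + i) (k + 1 + j)]
        refine Or.inr ⟨by omega, by omega, Or.inl (Or.inr ?_)⟩
        simp only [shiftPart]
        refine ⟨by omega, by omega, ?_⟩
        have e1 : k + 1 + i - k - 1 = i := by omega
        have e2 : k + 1 + j - k - 1 = j := by omega
        rw [e1, e2]; exact h
      exact ⟨hRij, hd.1, hd.2⟩
    · rintro ⟨hij, hi, hj⟩
      have := (hiff' (k + 1 + i) (k + 1 + j)).1 hij
      rcases this with hP | ⟨h1, h2, hT⟩
      · have := (ncp_dom hP' hP).1; omega
      simp only [concatPart, shiftPart, onePart, rmergePart] at hT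
      have e1 : k + 1 + i - k = i + 1 := by omega
      have e2 : k + 1 + j - k = j + 1 := by omega
      rw [e1, e2] at hT
      rcases hT with (⟨ha, hb⟩ | ⟨-, -, hq⟩) | (⟨⟨ha, -⟩, -⟩ | ⟨-, hb, -⟩)
      · omega
      · simpa using hq
      · omega
      · omega
  rw [hPP, hQQ]
end

section
/- Let f = I·F ∈ G_B^I with F ∈ G_B^{inv}. Then the S-transform S_f, defined by f^{∘−1} = I · S_f, is the unique solution g ∈ G_B^{inv} of the fixed point equation g = (F ∘ (I·g))^{−1}, where the inverse on the right-hand side is the multiplicative inverse in (Mult[[B]], ·). -/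
/-!
Write `X = F ∘ (I·S)`. For `g` with `g_0 = 0` one has `(I·F) ∘ g = g · (F ∘ g)`, since every
term of the composition starts with the first block of `g`; so `(I·F) ∘ (I·S) = I` reads
`I · (S · X) = I · 1`, and cancelling `I·` gives `S · X = 1`. As `X_0 = F_0` is invertible, `X`
is a unit of `(Mult[[B]], ·)`, its inverse being solvable for degree by degree; hence also
`X · S = 1`. For uniqueness, degree `n` of `g · (F ∘ (I·g))` is `g_n F_0` plus terms involving
only `g_0, …, g_{n-1}`, so the fixed point equation determines `g` recursively.
-/

universe u

/-- A (formal) series of `n`-ary functions on `B` (the carrier of `Mult[[B]]`). -/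
def MSeries (B : Type u) : Type u := ∀ n : ℕ, (Fin n → B) → B

namespace MSeries

variable {B : Type u} [Ring B]

/-- The multiplication `(f · g)_n(x₁,…,xₙ) = ∑ₖ f_k(x₁,…,x_k) g_{n-k}(x_{k+1},…,xₙ)`. -/
def mul (f g : MSeries B) : MSeries B := fun n x =>
  ∑ k : Fin (n + 1),
    f k.1 (fun i => x (Fin.castLE (Nat.lt_succ_iff.mp k.isLt) i)) *
      g (n - k.1) (fun i => x ⟨k.1 + i.1, by have h1 := k.isLt; have h2 := i.isLt; omega⟩)

/-- The composition `(f ∘ g)_n(x₁,…,xₙ)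
  = ∑_{n = k₁ + ⋯ + k_l, kᵢ ≥ 1} f_l(g_{k₁}(x₁,…), …, g_{k_l}(…,xₙ))`. -/
def comp (f g : MSeries B) : MSeries B := fun n x =>
  ∑ c : Composition n,
    f c.length (fun i => g (c.blocksFun i) (fun j => x (c.embedding i j)))

/-- The compositional identity `I = (δ_{n,1} Id)`. -/
def idS : MSeries B := fun n =>
  match n with
  | 1 => fun x => x 0
  | _ => fun _ => 0

/-- The multiplicative unit `1 = (δ_{n,0} 1)`. -/
def oneS : MSeries B := fun n _ => if n = 0 then 1 else 0

end MSeries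

/-- `f` is a series of `K`-multilinear functions, i.e. `f ∈ Mult[[B]]`. -/
def IsMultSeries (K : Type u) [Field K] {B : Type u} [Ring B] [Algebra K B]
    (f : MSeries B) : Prop :=
  ∀ n, ∃ F : MultilinearMap K (fun _ : Fin n => B) B, ∀ x, f n x = F x

/-- Splitting off the first block `k + 1` of a composition. -/
def Composition.consEquiv (n : ℕ) :
    (Σ k : Fin (n + 1), Composition (n + 1 - (k + 1))) ≃ Composition (n + 1) where
  toFun p := ⟨(p.1 + 1) :: p.2.blocks,
    by simpa using fun i hi => p.2.blocks_pos hi,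
    by have := p.1.isLt; simp only [List.sum_cons, p.2.blocks_sum]; omega⟩
  invFun
    | ⟨k :: l, hpos, hsum⟩ => ⟨⟨k - 1, by simp only [List.sum_cons] at hsum; omega⟩,
        ⟨l, fun hi => hpos (List.mem_cons_of_mem _ hi), by
          simp only [List.sum_cons, List.mem_cons, forall_eq_or_imp] at hsum hpos ⊢; omega⟩⟩
    | ⟨[], _, hsum⟩ => absurd hsum (by simp)
  left_inv _ := rfl
  right_inv
    | ⟨k :: l, hpos, hsum⟩ => Composition.ext (by
      simp only [List.mem_cons, forall_eq_or_imp, List.cons.injEq, and_true] at hpos ⊢; omega)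
    | ⟨[], _, hsum⟩ => absurd hsum (by simp)

namespace MSeries

variable {B : Type u}

theorem apply_congr (f : MSeries B) {a b : ℕ} (hab : a = b) {x : Fin a → B} {y : Fin b → B}
    (hxy : ∀ (i : Fin a) (j : Fin b), i.1 = j.1 → x i = y j) : f a x = f b y := by
  subst hab
  rw [funext fun i => hxy i i rfl]

variable [Ring B]

theorem mul_oneS (f : MSeries B) : f.mul oneS = f := by
  funext n x
  refine (Finset.sum_eq_single_of_mem (Fin.last n) (Finset.mem_univ _) fun k _ hk => ?_).trans ?_
  · have : n - k.1 ≠ 0 := by have := Fin.val_lt_last hk; omega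
    simp [oneS, this]
  · simp only [Fin.val_last, oneS, Nat.sub_self, if_true, mul_one]
    exact apply_congr f rfl fun i j hij => congrArg x (Fin.ext hij)

theorem oneS_mul (f : MSeries B) : oneS.mul f = f := by
  funext n x
  refine (Finset.sum_eq_single_of_mem 0 (Finset.mem_univ _) fun k _ hk => ?_).trans ?_
  · simp [oneS, Fin.val_ne_zero_iff.2 hk]
  · simp only [Fin.val_zero, oneS, if_true, one_mul]
    exact apply_congr f (Nat.sub_zero n) fun i j hij => congrArg x (Fin.ext (by simpa using hij))

/-- The two ways of indexing the pairs of cut points of a triple product `(f · g) · h`. -/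
def cutPointsEquiv (n : ℕ) :
    (Σ j : Fin (n + 1), Fin (j.1 + 1)) ≃ (Σ k : Fin (n + 1), Fin (n - k.1 + 1)) where
  toFun p := ⟨⟨p.2.1, by have := p.1.isLt; have := p.2.isLt; omega⟩,
    ⟨p.1.1 - p.2.1, by have := p.1.isLt; have := p.2.isLt; show _ < n - p.2.1 + 1; omega⟩⟩
  invFun q := ⟨⟨q.1.1 + q.2.1, by have := q.1.isLt; have := q.2.isLt; omega⟩,
    ⟨q.1.1, by show _ < q.1.1 + q.2.1 + 1; omega⟩⟩
  left_inv := fun ⟨⟨a, ha⟩, ⟨b, hb⟩⟩ => by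
    have hb' : b < a + 1 := hb
    refine Sigma.ext (Fin.ext ?_) ((Fin.heq_ext_iff ?_).2 ?_) <;> simp only <;> omega
  right_inv := fun ⟨⟨a, ha⟩, ⟨b, hb⟩⟩ => by
    have hb' : b < n - a + 1 := hb
    refine Sigma.ext (Fin.ext ?_) ((Fin.heq_ext_iff ?_).2 ?_) <;> simp

protected theorem mul_assoc (f g h : MSeries B) : (f.mul g).mul h = f.mul (g.mul h) := by
  funext n x
  simp only [mul, Finset.sum_mul, Finset.mul_sum]
  rw [Finset.sum_sigma', Finset.sum_sigma', Finset.univ_sigma_univ, Finset.univ_sigma_univ]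
  refine Fintype.sum_equiv (cutPointsEquiv n) _ _ fun ⟨⟨a, ha⟩, ⟨b, hb⟩⟩ => ?_
  have hb' : b < a + 1 := hb
  dsimp only [cutPointsEquiv, Equiv.coe_fn_mk]
  rw [mul_assoc]
  congr 2
  exact apply_congr h (by omega) fun i j hij =>
    congrArg x (Fin.ext (by simp only at hij ⊢; omega))

instance : Monoid (MSeries B) where
  mul := mul
  one := oneS
  mul_assoc := MSeries.mul_assoc
  one_mul := oneS_mul
  mul_one := mul_oneS

theorem mul_def (f g : MSeries B) : f * g = f.mul g := rfl

theorem one_def : (1 : MSeries B) = oneS := rfl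

theorem idS_apply_of_ne_one {n : ℕ} (hn : n ≠ 1) (x : Fin n → B) : idS n x = 0 := by
  match n, hn with
  | 0, _ => rfl
  | _ + 2, _ => rfl

theorem idS_mul_apply_zero (f : MSeries B) (x : Fin 0 → B) : idS.mul f 0 x = 0 := by
  simp [mul, idS]

theorem idS_mul_apply_succ (f : MSeries B) (n : ℕ) (x : Fin (n + 1) → B) :
    idS.mul f (n + 1) x = x 0 * f n (Fin.tail x) := by
  refine (Finset.sum_eq_single_of_mem 1 (Finset.mem_univ _) fun k _ hk => ?_).trans ?_
  · rw [idS_apply_of_ne_one (fun h => hk (Fin.ext h)), zero_mul]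
  · refine congrArg₂ _ rfl (apply_congr f (by simp) fun i j hij => congrArg x (Fin.ext ?_))
    simp only [Fin.coe_ofNat_eq_mod, Nat.one_mod, Fin.val_succ] at hij ⊢
    omega

theorem idS_mul_injective : Function.Injective (idS.mul : MSeries B → MSeries B) := by
  intro f g hfg
  funext n x
  simpa [idS_mul_apply_succ] using congrFun (congrFun hfg (n + 1)) (Fin.cons 1 x)

def rightInv (f : MSeries B) (u : Bˣ) : MSeries B
  | 0 => fun _ => ↑u⁻¹
  | n + 1 => fun x => -(↑u⁻¹ * ∑ k : Fin (n + 1),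
      f (k + 1) (fun i => x (Fin.castLE (by omega) i)) *
        rightInv f u (n + 1 - (k + 1)) (fun i => x ⟨k + 1 + i, by omega⟩))

theorem mul_rightInv (f : MSeries B) (u : Bˣ) (hu : f 0 Fin.elim0 = u) :
    f * rightInv f u = 1 := by
  funext n x
  have hf0 (y : Fin 0 → B) : f 0 y = u := (apply_congr f rfl fun i => i.elim0).trans hu
  cases n with
  | zero =>
    simp [mul_def, one_def, mul, oneS, rightInv, hf0]
  | succ n =>
    show ∑ k : Fin (n + 2), _ = oneS (n + 1) x
    rw [Fin.sum_univ_succ]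
    simp only [Fin.val_zero, Fin.val_succ, hf0]
    have hshift :
        rightInv f u (n + 1 - 0) (fun i => x ⟨0 + i, by omega⟩) = rightInv f u (n + 1) x :=
      apply_congr _ rfl fun i j hij => congrArg x (Fin.ext (by simpa using hij))
    rw [hshift, rightInv, mul_neg, ← mul_assoc, Units.mul_inv, one_mul, neg_add_cancel]
    rfl

theorem rightInv_apply_zero (f : MSeries B) (u : Bˣ) : rightInv f u 0 Fin.elim0 = ↑u⁻¹ := by
  rw [rightInv]

theorem isUnit_of_isUnit_apply_zero {f : MSeries B} (hf : IsUnit (f 0 Fin.elim0)) : IsUnit f := by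
  obtain ⟨u, hu⟩ := hf
  have hR := mul_rightInv f u hu.symm
  have hR' := mul_rightInv (rightInv f u) u⁻¹ (rightInv_apply_zero f u)
  rw [← left_inv_eq_right_inv hR hR'] at hR'
  exact ⟨⟨f, rightInv f u, hR, hR'⟩, rfl⟩

theorem comp_apply_zero (f g : MSeries B) (x : Fin 0 → B) : f.comp g 0 x = f 0 Fin.elim0 := by
  refine (Finset.sum_eq_single_of_mem (Composition.ones 0) (Finset.mem_univ _)
    fun c _ hc => absurd (Composition.eq_ones_iff_le_length.2 (Nat.zero_le _)) hc).trans ?_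
  exact apply_congr f (Composition.ones_length 0) fun _ j _ => j.elim0

theorem idS_mul_comp (f g : MSeries B) (hg : ∀ x, g 0 x = 0) :
    (idS.mul f).comp g = g.mul (f.comp g) := by
  funext n x
  cases n with
  | zero =>
    rw [comp_apply_zero, idS_mul_apply_zero]
    simp [mul, hg]
  | succ n =>
    show ∑ c : Composition (n + 1), idS.mul f c.length _ = ∑ k : Fin (n + 2), g k _ * _
    rw [Fin.sum_univ_succ, ← Equiv.sum_comp (Composition.consEquiv n), Fintype.sum_sigma]
    simp only [Fin.val_zero, Fin.val_succ, hg, zero_mul, comp, Finset.mul_sum,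
      Finset.sum_const_zero, zero_add]
    refine Finset.sum_congr rfl fun k _ => ?_
    refine Finset.sum_congr rfl fun c _ => ?_
    dsimp only [Composition.consEquiv, Equiv.coe_fn_mk, Composition.length, List.length_cons]
    rw [idS_mul_apply_succ]
    congr 1
    · refine apply_congr g rfl fun a b hab => congrArg x (Fin.ext ?_)
      refine (Composition.coe_embedding _ _ _).trans ?_
      simp only [Composition.sizeUpTo, Fin.val_zero, List.take_zero, List.sum_nil]
      exact (zero_add _).trans hab
    · refine apply_congr f rfl fun i j hij => ?_
      obtain rfl : i = j := Fin.ext hij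
      refine apply_congr g rfl fun a b hab => congrArg x (Fin.ext ?_)
      refine (Composition.coe_embedding _ _ _).trans ?_
      have hb := Composition.coe_embedding c i b
      simp only [Fin.val_succ, Composition.sizeUpTo, List.take_succ_cons, List.sum_cons] at hb ⊢
      omega

theorem comp_apply_congr_right (f : MSeries B) {g g' : MSeries B} {n : ℕ}
    (hg : ∀ m ≤ n, g m = g' m) {m : ℕ} (hm : m ≤ n) (x : Fin m → B) :
    f.comp g m x = f.comp g' m x := by
  refine Finset.sum_congr rfl fun c _ => apply_congr f rfl fun i j hij => ?_
  obtain rfl : i = j := Fin.ext hij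
  rw [hg _ ((c.blocksFun_le i).trans hm)]

theorem idS_mul_congr {g g' : MSeries B} {n : ℕ} (hg : ∀ m < n, g m = g' m) :
    ∀ m ≤ n, idS.mul g m = idS.mul g' m
  | 0, _ => funext fun x => by rw [idS_mul_apply_zero, idS_mul_apply_zero]
  | m + 1, hm => funext fun x => by rw [idS_mul_apply_succ, idS_mul_apply_succ, hg m hm]

theorem mul_apply_eq_sum_add (f g : MSeries B) (n : ℕ) (x : Fin n → B) :
    (f * g) n x = ∑ k : Fin n, f k (fun i => x (Fin.castLE k.isLt.le i)) *
        g (n - k) (fun i => x ⟨k + i, by omega⟩) + f n x * g 0 Fin.elim0 := by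
  refine (Fin.sum_univ_castSucc _).trans (congrArg₂ _ rfl (congrArg₂ _ ?_ ?_))
  · exact apply_congr f rfl fun i j hij => congrArg x (Fin.ext hij)
  · exact apply_congr g (by simp) fun i _ _ => absurd i.isLt (by simp)

theorem eq_of_mul_comp_idS_mul_eq_one {f g g' : MSeries B} (hf0 : IsUnit (f 0 Fin.elim0))
    (hg : g * f.comp (idS.mul g) = 1) (hg' : g' * f.comp (idS.mul g') = 1) : g = g' := by
  funext n
  induction n using Nat.strong_induction_on with
  | _ n ih =>
    funext x
    have hn := congrFun (congrFun hg n) x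
    have hn' := congrFun (congrFun hg' n) x
    rw [mul_apply_eq_sum_add, comp_apply_zero] at hn hn'
    have hlower : ∀ m ≤ n, idS.mul g m = idS.mul g' m := idS_mul_congr ih
    have hsum : ∑ k : Fin n, g k (fun i => x (Fin.castLE k.isLt.le i)) *
          f.comp (idS.mul g) (n - k) (fun i => x ⟨k + i, by omega⟩) =
        ∑ k : Fin n, g' k (fun i => x (Fin.castLE k.isLt.le i)) *
          f.comp (idS.mul g') (n - k) (fun i => x ⟨k + i, by omega⟩) :=
      Finset.sum_congr rfl fun k _ => by
        rw [ih k k.isLt, comp_apply_congr_right f hlower (Nat.sub_le n k)]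
    rw [hsum] at hn
    exact hf0.mul_right_cancel (add_left_cancel (hn.trans hn'.symm))

end MSeries

open MSeries in
theorem S_transform_fixed_point_general {K B : Type u} [Field K] [Ring B] [Algebra K B]
    (F S h : MSeries B)
    (hF0 : IsUnit (F 0 fun i => i.elim0))
    (hinv1 : (idS.mul F).comp h = idS)
    (hSdef : h = idS.mul S) :
    (S.mul (F.comp (idS.mul S)) = oneS ∧ (F.comp (idS.mul S)).mul S = oneS) ∧
    ∀ g : MSeries B, IsMultSeries K g → IsUnit (g 0 fun i => i.elim0) →
      (g.mul (F.comp (idS.mul g)) = oneS ∧ (F.comp (idS.mul g)).mul g = oneS) →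
      g = S := by
  subst hSdef
  set X := F.comp (idS.mul S)
  have hSX : S * X = 1 := idS_mul_injective <|
    calc idS * (S * X) = idS * S * X := (mul_assoc _ _ _).symm
      _ = idS := (idS_mul_comp F _ (idS_mul_apply_zero S)).symm.trans hinv1
      _ = idS * 1 := (mul_one _).symm
  have hX0 : X 0 Fin.elim0 = F 0 Fin.elim0 := comp_apply_zero _ _ _
  have hX : IsUnit X := isUnit_of_isUnit_apply_zero (hX0 ▸ hF0)
  have hXS : X * S = 1 := hX.mul_right_cancel (by rw [mul_assoc, hSX, mul_one, one_mul])
  exact ⟨⟨hSX, hXS⟩, fun g _ _ hg => eq_of_mul_comp_idS_mul_eq_one hF0 hg.1 hSX⟩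

open MSeries in
/-- The S-transform `S_f` of `f = I·F ∈ G_B^I`, defined by `f^{∘-1} = I · S_f`, is the
unique solution of the fixed point equation `S = (F ∘ (I·S))⁻¹` in `G_B^{inv}`. -/
theorem S_transform_fixed_point {K B : Type u} [Field K] [CharZero K] [Ring B] [Algebra K B]
    (F S h : MSeries B)
    (hF : IsMultSeries K F) (hF0 : IsUnit (F 0 fun i => i.elim0))
    (hS : IsMultSeries K S) (hS0 : IsUnit (S 0 fun i => i.elim0))
    (hinv1 : (idS.mul F).comp h = idS) (hinv2 : h.comp (idS.mul F) = idS)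
    (hSdef : h = idS.mul S) :
    (S.mul (F.comp (idS.mul S)) = oneS ∧ (F.comp (idS.mul S)).mul S = oneS) ∧
    ∀ g : MSeries B, IsMultSeries K g → IsUnit (g 0 fun i => i.elim0) →
      (g.mul (F.comp (idS.mul g)) = oneS ∧ (F.comp (idS.mul g)).mul g = oneS) →
      g = S :=
  S_transform_fixed_point_general F S h hF0 hinv1 hSdef
end
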